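/- If Z ∼ SN(λ), then Z² has a chi-squared distribution with one degree of freedom; equivalently, for every real λ, the pushforward of the SN(λ) measure under the map z ↦ z² coincides with the pushforward of the standard Gaussian measure under z ↦ z² (the Gamma(1/2, rate 1/2) distribution). -/

import Mathlib

/-!
Since `Φ(λx) + Φ(-λx) = 1`, the skew-normal density `2φ(x)Φ(λx)` and its reflection average to
`φ(x)`; an even function of `Z`, such as `Z²`, only sees this average, so it has the same law
under `SN(λ)` as under `N(0, 1)`. For a standard normal `Z`, folding to `|Z|` doubles the density
on `(0, ∞)`, and the substitution `x = √y` turns `2φ(√y) / (2√y)` into the `Gamma(1/2, 1/2)`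
density `y^(-1/2) e^(-y/2) / √(2π)`.
-/

open MeasureTheory ProbabilityTheory

noncomputable def normPdf (x : ℝ) : ℝ := Real.exp (-x ^ 2 / 2) / Real.sqrt (2 * Real.pi)

noncomputable def normCdf (x : ℝ) : ℝ := ∫ t in Set.Iic x, normPdf t

noncomputable def snMeasure (l : ℝ) : Measure ℝ :=
  volume.withDensity fun x => ENNReal.ofReal (2 * normPdf x * normCdf (l * x))

open Real Set
open scoped ENNReal

section Symmetrization

variable {G β : Type*} [MeasurableSpace G] [InvolutiveNeg G] [MeasurableNeg G] [MeasurableSpace β]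
  {μ : Measure G} [μ.IsNegInvariant]

theorem map_withDensity_eq_map_of_add_neg_eq_two {w : G → ℝ≥0∞} (hw : Measurable w)
    (hw_add : ∀ x, w x + w (-x) = 2) {f : G → β} (hf : Measurable f)
    (hf_even : ∀ x, f (-x) = f x) :
    (μ.withDensity w).map f = μ.map f := by
  ext s hs
  rw [Measure.map_apply hf hs, Measure.map_apply hf hs, withDensity_apply _ (hf hs)]
  have h_neg : ∫⁻ x in f ⁻¹' s, w (-x) ∂μ = ∫⁻ x in f ⁻¹' s, w x ∂μ := by
    conv_lhs => rw [show f ⁻¹' s = Neg.neg ⁻¹' (f ⁻¹' s) by ext x; simp [hf_even]]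
    exact (Measure.measurePreserving_neg μ).setLIntegral_comp_preimage_emb
      measurableEmbedding_neg w _
  refine (ENNReal.mul_right_inj two_ne_zero ENNReal.ofNat_ne_top).1 ?_
  calc 2 * ∫⁻ x in f ⁻¹' s, w x ∂μ
      = ∫⁻ x in f ⁻¹' s, w x + w (-x) ∂μ := by
        rw [lintegral_add_left hw, h_neg, two_mul]
    _ = 2 * μ (f ⁻¹' s) := by simp only [hw_add, setLIntegral_const]

end Symmetrization

theorem lintegral_comp_abs (f : ℝ → ℝ≥0∞) : ∫⁻ x, f |x| = 2 * ∫⁻ x in Ioi 0, f x := by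
  have h_pos : ∫⁻ x in Ioi 0, f |x| = ∫⁻ x in Ioi 0, f x :=
    setLIntegral_congr_fun measurableSet_Ioi fun x hx => by rw [abs_of_pos hx]
  have h_neg : ∫⁻ x in (Ioi 0)ᶜ, f |x| = ∫⁻ x in Ioi 0, f |x| := by
    rw [compl_Ioi, setLIntegral_congr Iio_ae_eq_Iic.symm,
      show Iio (0 : ℝ) = Neg.neg ⁻¹' Ioi 0 by ext x; simp]
    simpa only [abs_neg] using (Measure.measurePreserving_neg volume).setLIntegral_comp_preimage_emb
      measurableEmbedding_neg (fun x => f |x|) (Ioi 0)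
  rw [← lintegral_add_compl _ measurableSet_Ioi, h_neg, h_pos, two_mul]

theorem map_abs_withDensity_of_even {g : ℝ → ℝ≥0∞} (hg : ∀ x, g (-x) = g x) :
    (volume.withDensity g).map abs = (volume.restrict (Ioi 0)).withDensity fun x => 2 * g x := by
  ext s hs
  have h_abs : (abs ⁻¹' s).indicator g = fun x => s.indicator g |x| := by
    have hg_abs : ∀ x, g |x| = g x := fun x => by rcases abs_choice x with h | h <;> simp [h, hg]
    ext x
    by_cases hx : |x| ∈ s <;> simp [hx, hg_abs]
  rw [Measure.map_apply measurable_abs hs, withDensity_apply _ (measurable_abs hs),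
    withDensity_apply _ hs, Measure.restrict_restrict hs, ← lintegral_indicator (measurable_abs hs),
    h_abs, lintegral_comp_abs, lintegral_const_mul' _ _ ENNReal.ofNat_ne_top,
    setLIntegral_indicator hs]

theorem map_sq_withDensity_restrict_Ioi (h : ℝ → ℝ≥0∞) :
    ((volume.restrict (Ioi 0)).withDensity h).map (· ^ 2) =
      (volume.restrict (Ioi 0)).withDensity fun y => ENNReal.ofReal (1 / (2 * √y)) * h √y := by
  ext s hs
  have h_meas : Measurable fun x : ℝ => x ^ 2 := by fun_prop
  have h_image : (· ^ 2) ⁻¹' s ∩ Ioi 0 = sqrt '' (s ∩ Ioi 0) := by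
    ext x
    constructor
    · rintro ⟨hxs, hx⟩
      exact ⟨x ^ 2, ⟨hxs, mem_Ioi.2 (pow_pos hx 2)⟩, sqrt_sq (le_of_lt hx)⟩
    · rintro ⟨y, ⟨hys, hy⟩, rfl⟩
      exact ⟨by simpa [sq_sqrt hy.le] using hys, sqrt_pos.2 hy⟩
  have h_deriv : ∀ y ∈ s ∩ Ioi 0, HasDerivWithinAt sqrt (1 / (2 * √y)) (s ∩ Ioi 0) y :=
    fun y hy => (hasDerivAt_sqrt hy.2.ne').hasDerivWithinAt
  have h_inj : InjOn sqrt (s ∩ Ioi 0) := fun a ha b hb hab => (sqrt_inj ha.2.le hb.2.le).1 hab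
  rw [Measure.map_apply h_meas hs, withDensity_apply _ (h_meas hs), withDensity_apply _ hs,
    Measure.restrict_restrict (h_meas hs), Measure.restrict_restrict hs, h_image,
    lintegral_image_eq_lintegral_abs_deriv_mul (hs.inter measurableSet_Ioi) h_deriv h_inj]
  refine setLIntegral_congr_fun (hs.inter measurableSet_Ioi) fun y hy => ?_
  rw [abs_of_pos (by have := sqrt_pos.2 hy.2; positivity)]

theorem gaussianPDF_neg (v : NNReal) (x : ℝ) : gaussianPDF 0 v (-x) = gaussianPDF 0 v x := by
  simp [gaussianPDF, gaussianPDFReal]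

instance isNegInvariant_gaussianReal (v : NNReal) : (gaussianReal 0 v).IsNegInvariant :=
  ⟨by rw [Measure.neg, gaussianReal_map_neg, neg_zero]⟩

theorem gammaPDFReal_half_half {y : ℝ} (hy : 0 < y) :
    gammaPDFReal (1 / 2) (1 / 2) y = gaussianPDFReal 0 1 √y / √y := by
  rw [gammaPDFReal, if_pos hy.le, gaussianPDFReal, Gamma_one_half_eq,
    show (1 / 2 : ℝ) - 1 = -(1 / 2) by norm_num, rpow_neg hy.le, ← sqrt_eq_rpow, ← sqrt_eq_rpow]
  simp only [NNReal.coe_one, mul_one, sub_zero, sq_sqrt hy.le, sqrt_mul (by norm_num : (0:ℝ) ≤ 2),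
    one_div, sqrt_inv]
  field_simp

theorem gammaPDF_half_half_of_nonpos {y : ℝ} (hy : y ≤ 0) : gammaPDF (1 / 2) (1 / 2) y = 0 := by
  rcases hy.lt_or_eq with hy | rfl
  · exact gammaPDF_of_neg hy
  -- Lean's `0 ^ (-1/2) = 0`, although the density blows up at `0`.
  · rw [gammaPDF_of_nonneg le_rfl, zero_rpow (by norm_num), mul_zero, zero_mul, ENNReal.ofReal_zero]

theorem map_sq_gaussianReal : (gaussianReal 0 1).map (· ^ 2) = gammaMeasure (1 / 2) (1 / 2) := by
  have h_sq : (fun z : ℝ => z ^ 2) = (· ^ 2) ∘ abs := funext fun z => (sq_abs z).symm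
  rw [h_sq, ← Measure.map_map (by fun_prop) measurable_abs,
    gaussianReal_of_var_ne_zero 0 one_ne_zero, map_abs_withDensity_of_even (gaussianPDF_neg 1),
    map_sq_withDensity_restrict_Ioi, gammaMeasure, ← withDensity_indicator measurableSet_Ioi]
  congr 1
  ext y
  rcases le_or_gt y 0 with hy | hy
  · rw [indicator_of_notMem (s := Ioi 0) (not_lt.2 hy), gammaPDF_half_half_of_nonpos hy]
  · rw [indicator_of_mem (s := Ioi 0) hy, gammaPDF, gammaPDFReal_half_half hy, gaussianPDF,
      ← ENNReal.ofReal_ofNat 2, ← ENNReal.ofReal_mul zero_le_two,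
      ← ENNReal.ofReal_mul (by positivity)]
    congr 1
    field_simp

theorem normPdf_eq_gaussianPDFReal : normPdf = gaussianPDFReal 0 1 := by
  ext x
  simp [normPdf, gaussianPDFReal, div_eq_inv_mul]

theorem normPdf_neg (x : ℝ) : normPdf (-x) = normPdf x := by simp [normPdf]

theorem integrable_normPdf : Integrable normPdf :=
  normPdf_eq_gaussianPDFReal ▸ integrable_gaussianPDFReal 0 1

theorem monotone_normCdf : Monotone normCdf := fun _ _ hxy =>
  setIntegral_mono_set integrable_normPdf.integrableOn
    (.of_forall fun t => normPdf_eq_gaussianPDFReal ▸ gaussianPDFReal_nonneg 0 1 t)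
    (Iic_subset_Iic.2 hxy).eventuallyLE

theorem normCdf_add_normCdf_neg (x : ℝ) : normCdf x + normCdf (-x) = 1 := by
  have h_neg : normCdf (-x) = ∫ t in Ioi x, normPdf t := by
    rw [normCdf, ← neg_neg x, ← integral_comp_neg_Ioi]
    simp_rw [neg_neg, normPdf_neg]
  rw [normCdf, h_neg, intervalIntegral.integral_Iic_add_Ioi integrable_normPdf.integrableOn
    integrable_normPdf.integrableOn, normPdf_eq_gaussianPDFReal,
    integral_gaussianPDFReal_eq_one 0 one_ne_zero]

theorem ofReal_two_mul_normCdf_add_neg (x : ℝ) :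
    ENNReal.ofReal (2 * normCdf x) + ENNReal.ofReal (2 * normCdf (-x)) = 2 := by
  have h_nonneg (y : ℝ) : 0 ≤ 2 * normCdf y := mul_nonneg zero_le_two <|
    setIntegral_nonneg measurableSet_Iic fun t _ =>
      normPdf_eq_gaussianPDFReal ▸ gaussianPDFReal_nonneg 0 1 t
  rw [← ENNReal.ofReal_add (h_nonneg x) (h_nonneg (-x)), ← mul_add, normCdf_add_normCdf_neg,
    mul_one, ENNReal.ofReal_ofNat]

theorem measurable_ofReal_two_mul_normCdf (l : ℝ) :
    Measurable fun x => ENNReal.ofReal (2 * normCdf (l * x)) :=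
  ((monotone_normCdf.measurable.comp (measurable_const_mul l)).const_mul 2).ennreal_ofReal

theorem snMeasure_eq_withDensity (l : ℝ) :
    snMeasure l = (gaussianReal 0 1).withDensity fun x => ENNReal.ofReal (2 * normCdf (l * x)) := by
  rw [snMeasure, gaussianReal_of_var_ne_zero 0 one_ne_zero,
    ← withDensity_mul _ (measurable_gaussianPDF 0 1) (measurable_ofReal_two_mul_normCdf l)]
  congr 1
  ext x
  rw [Pi.mul_apply, gaussianPDF, ← ENNReal.ofReal_mul (gaussianPDFReal_nonneg 0 1 x),
    ← normPdf_eq_gaussianPDFReal, mul_assoc, mul_left_comm]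

/-- If `Z ∼ SN(l)` then `Z²` is chi-squared with one degree of freedom: the
pushforward of `SN(l)` under `z ↦ z²` coincides with the pushforward of the
standard Gaussian under `z ↦ z²`, which is the Gamma(1/2, rate 1/2) distribution. -/
theorem sn_sq_chiSq (l : ℝ) :
    Measure.map (fun z : ℝ => z ^ 2) (snMeasure l) =
      Measure.map (fun z : ℝ => z ^ 2) (gaussianReal 0 1) ∧
    Measure.map (fun z : ℝ => z ^ 2) (snMeasure l) = gammaMeasure (1/2) (1/2) := by
  have h_sn : (snMeasure l).map (· ^ 2) = (gaussianReal 0 1).map (· ^ 2) := by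
    rw [snMeasure_eq_withDensity]
    refine map_withDensity_eq_map_of_add_neg_eq_two (measurable_ofReal_two_mul_normCdf l)
      (fun x => ?_) (by fun_prop) neg_sq
    rw [mul_neg]
    exact ofReal_two_mul_normCdf_add_neg (l * x)
  exact ⟨h_sn, h_sn.trans map_sq_gaussianReal⟩
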